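/- Let n, r ≥ 0 with 2r ≤ n and let μ be a partition of n − 2r. Then the number of oscillating tableaux of shape μ and length n satisfies f̃^μ_n = C(n, 2r) · (2r−1)!! · f^μ, where C(n,2r) is the binomial coefficient, (2r−1)!! = (2r−1)(2r−3)⋯3·1 (with (−1)!! = 1), and f^μ is the number of standard Young tableaux of shape μ. -/

import Mathlib

open scoped BigOperators

/-- A function `ℕ → ℕ` represents an integer partition if it is weakly decreasing and
eventually zero (the value at `i` is the length of row `i` of the Young diagram). -/
def IsPartFun (f : ℕ → ℕ) : Prop :=
  (∀ i j : ℕ, i ≤ j → f j ≤ f i) ∧ ∃ N, ∀ i, N ≤ i → f i = 0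

/-- The Young diagram of `g` is obtained from that of `f` by adding exactly one square. -/
def AddBox (f g : ℕ → ℕ) : Prop :=
  ∃ i, g = Function.update f i (f i + 1)

/-- `T` is an oscillating tableau of length `n`: a sequence `∅ = μ⁰, μ¹, …, μⁿ` of
partitions in which consecutive diagrams differ by adding or removing one square. -/
def IsOscTab (n : ℕ) (T : Fin (n + 1) → ℕ → ℕ) : Prop :=
  (∀ k, IsPartFun (T k)) ∧ T 0 = (fun _ => 0) ∧
    ∀ k : Fin n, AddBox (T k.castSucc) (T k.succ) ∨ AddBox (T k.succ) (T k.castSucc)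

/-- `f̃^μ_n`: the number of oscillating tableaux of shape `μ` and length `n`. -/
noncomputable def oscTabCount (n : ℕ) (mu : ℕ → ℕ) : ℕ :=
  Nat.card {T : Fin (n + 1) → ℕ → ℕ // IsOscTab n T ∧ T (Fin.last n) = mu}

/-- `f^μ`: the number of standard Young tableaux of shape `μ`, i.e. of chains
`∅ = ν⁰ ⊂ ν¹ ⊂ ⋯ ⊂ ν^m = μ` of Young diagrams each obtained from the previous one
by adding one square (here `m = |μ|`). -/
noncomputable def sytCount (m : ℕ) (mu : ℕ → ℕ) : ℕ :=
  Nat.card {T : Fin (m + 1) → ℕ → ℕ //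
    (∀ k, IsPartFun (T k)) ∧ T 0 = (fun _ => 0) ∧ T (Fin.last m) = mu ∧
    ∀ k : Fin m, AddBox (T k.castSucc) (T k.succ)}

/-!
An oscillating tableau of length `n` and shape `μ` is a walk of length `n` from `∅` to `μ` in the
Hasse diagram of Young's lattice, and a standard Young tableau is such a walk that only goes up.
Splitting off the last step gives recursions for both counts: the last step of an oscillating
tableau adds a box to some `μ - eⱼ` or removes one from some `μ + eᵢ`. The commutation relation
`DU = UD + 1` of the down and up operators of Young's lattice gives `∑ᵢ f^(μ+eᵢ) = (|μ|+1) f^μ`, and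
with it the recursion for `f̃` reduces, by induction on `n`, to the recurrence
`a(n+1, r+1) = (n-2r) a(n, r) + a(n, r+1)` of `a(n, r) = C(n, 2r) (2r-1)!!`.
-/

section Walks

variable {α : Type*}

def RelWalk (R : α → α → Prop) (n : ℕ) (a b : α) : Type _ :=
  {T : Fin (n + 1) → α // T 0 = a ∧ T (Fin.last n) = b ∧ ∀ k : Fin n, R (T k.castSucc) (T k.succ)}

namespace RelWalk

variable {R : α → α → Prop}

def snocEquiv (n : ℕ) (a b : α) :
    RelWalk R (n + 1) a b ≃ Σ c : {c // R c b}, RelWalk R n a c where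
  toFun T := ⟨⟨T.1 (Fin.last n).castSucc, by simpa [T.2.2.1] using T.2.2.2 (Fin.last n)⟩,
    ⟨Fin.init T.1, T.2.1, rfl, fun k => by simpa [Fin.init] using T.2.2.2 k.castSucc⟩⟩
  invFun W := ⟨Fin.snoc W.2.1 b, by simpa using W.2.2.1, by simp,
    Fin.lastCases (by simpa [W.2.2.2.1] using W.1.2)
      (fun k => by simpa only [Fin.succ_castSucc, Fin.snoc_castSucc] using W.2.2.2.2 k)⟩
  left_inv T := Subtype.ext <| by simpa [T.2.2.1] using Fin.snoc_init_self T.1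
  right_inv W := Sigma.subtype_ext (Subtype.ext <| by simpa using W.2.2.2.1)
    (Fin.init_snoc (α := fun _ => α) _ _)

instance (a b : α) : Subsingleton (RelWalk R 0 a b) :=
  ⟨fun T T' => Subtype.ext <| funext fun k => by rw [Fin.fin_one_eq_zero k, T.2.1, T'.2.1]⟩

theorem card_zero_self (a : α) : Nat.card (RelWalk R 0 a a) = 1 :=
  have : Nonempty (RelWalk R 0 a a) := ⟨⟨fun _ => a, rfl, rfl, Fin.elim0⟩⟩
  Nat.card_unique

theorem finite (hR : ∀ b, {c | R c b}.Finite) (n : ℕ) (a b : α) : Finite (RelWalk R n a b) := by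
  induction n generalizing b with
  | zero => infer_instance
  | succ n ih =>
    have : Finite {c // R c b} := hR b
    exact Finite.of_equiv _ (snocEquiv n a b).symm

theorem card_succ (hR : ∀ b, {c | R c b}.Finite) {n : ℕ} {a b : α} (s : Finset α)
    (hs : ∀ c, c ∈ s ↔ R c b) :
    Nat.card (RelWalk R (n + 1) a b) = ∑ c ∈ s, Nat.card (RelWalk R n a c) := by
  have := Fintype.subtype s hs
  have := finite hR n a
  rw [Nat.card_congr (snocEquiv n a b), Nat.card_sigma, Finset.sum_subtype s hs]

theorem isEmpty_of_lt (φ : α → ℕ) (hφ : ∀ c b, R c b → φ b ≤ φ c + 1) {n : ℕ} {a b : α}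
    (h : φ a + n < φ b) : IsEmpty (RelWalk R n a b) := by
  induction n generalizing b with
  | zero =>
    refine ⟨fun ⟨T, h0, hlast, _⟩ => ?_⟩
    rw [← hlast, ← h0] at h
    exact lt_irrefl _ h
  | succ n ih =>
    refine ⟨fun T => ?_⟩
    obtain ⟨⟨c, hc⟩, W⟩ := snocEquiv n a b T
    have := hφ c b hc
    exact (ih (b := c) (by omega)).false W

end RelWalk

end Walks

open Function

def addBoxAt (f : ℕ → ℕ) (i : ℕ) : ℕ → ℕ := update f i (f i + 1)

def removeBoxAt (f : ℕ → ℕ) (j : ℕ) : ℕ → ℕ := update f j (f j - 1)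

noncomputable def partSize (f : ℕ → ℕ) : ℕ := ∑ᶠ i, f i

noncomputable def partLength (f : ℕ → ℕ) : ℕ := sInf {N | ∀ i, N ≤ i → f i = 0}

def IsAddableRow (f : ℕ → ℕ) (i : ℕ) : Prop := i = 0 ∨ f i < f (i - 1)

def IsRemovableRow (f : ℕ → ℕ) (j : ℕ) : Prop := f (j + 1) < f j

instance (f : ℕ → ℕ) : DecidablePred (IsAddableRow f) :=
  fun i => inferInstanceAs (Decidable (i = 0 ∨ f i < f (i - 1)))

instance (f : ℕ → ℕ) : DecidablePred (IsRemovableRow f) :=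
  fun j => inferInstanceAs (Decidable (f (j + 1) < f j))

noncomputable def addableRows (f : ℕ → ℕ) : Finset ℕ :=
  (Finset.range (partLength f + 1)).filter (IsAddableRow f)

noncomputable def removableRows (f : ℕ → ℕ) : Finset ℕ :=
  (Finset.range (partLength f)).filter (IsRemovableRow f)

section Boxes

variable {f : ℕ → ℕ} {i j : ℕ}

theorem removeBoxAt_addBoxAt (f : ℕ → ℕ) (i : ℕ) : removeBoxAt (addBoxAt f i) i = f := by
  simp [removeBoxAt, addBoxAt]

theorem addBoxAt_removeBoxAt (h : f j ≠ 0) : addBoxAt (removeBoxAt f j) j = f := by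
  simp [removeBoxAt, addBoxAt, Nat.sub_add_cancel (Nat.pos_of_ne_zero h)]

theorem removeBoxAt_addBoxAt_comm (h : i ≠ j) :
    removeBoxAt (addBoxAt f i) j = addBoxAt (removeBoxAt f j) i := by
  simp [removeBoxAt, addBoxAt, h, h.symm, update_comm h]

theorem addBoxAt_injective (f : ℕ → ℕ) : Injective (addBoxAt f) := by
  intro i i' h
  by_contra hne
  simpa [addBoxAt, hne] using congrFun h i

theorem removeBoxAt_injOn (f : ℕ → ℕ) : Set.InjOn (removeBoxAt f) {j | f j ≠ 0} := by
  intro j hj j' _ h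
  by_contra hne
  have := congrFun h j
  simp only [removeBoxAt, update_self, update_of_ne hne] at this
  exact hj (by omega)

theorem IsRemovableRow.ne_zero (h : IsRemovableRow f j) : f j ≠ 0 := by
  unfold IsRemovableRow at h
  omega

theorem isAddableRow_and_isRemovableRow_addBoxAt_iff (h : i ≠ j) :
    IsAddableRow f i ∧ IsRemovableRow (addBoxAt f i) j ↔
      IsRemovableRow f j ∧ IsAddableRow (removeBoxAt f j) i := by
  rcases eq_or_ne i (j + 1) with rfl | hij
  · simp [IsAddableRow, IsRemovableRow, addBoxAt, removeBoxAt]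
    omega
  · have hji : j + 1 ≠ i := hij.symm
    unfold IsAddableRow IsRemovableRow addBoxAt removeBoxAt
    simp only [update_apply, h, h.symm, hji, if_false]
    split_ifs <;> omega

end Boxes

theorem isPartFun_zero : IsPartFun (fun _ => 0) := ⟨fun _ _ _ => le_rfl, 0, fun _ _ => rfl⟩

theorem partSize_zero : partSize (fun _ => 0) = 0 := finsum_zero

section Partitions

variable {f : ℕ → ℕ} {i j : ℕ}

namespace IsPartFun

theorem eq_zero_of_partLength_le (hf : IsPartFun f) (hi : partLength f ≤ i) : f i = 0 :=
  Nat.sInf_mem hf.2 i hi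

theorem lt_partLength (hf : IsPartFun f) (hi : f i ≠ 0) : i < partLength f :=
  lt_of_not_ge fun h => hi (hf.eq_zero_of_partLength_le h)

theorem hasFiniteSupport (hf : IsPartFun f) : HasFiniteSupport f :=
  (Set.finite_Iio (partLength f)).subset fun _ hi => hf.lt_partLength hi

theorem isRemovableRow_addBoxAt (hf : IsPartFun f) (i : ℕ) :
    IsRemovableRow (addBoxAt f i) i := by
  have := hf.1 i (i + 1) (by omega)
  simp [IsRemovableRow, addBoxAt]
  omega

theorem isAddableRow_removeBoxAt (hf : IsPartFun f) (hj : IsRemovableRow f j) :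
    IsAddableRow (removeBoxAt f j) j := by
  rcases j with _ | j
  · exact Or.inl rfl
  · have := hf.1 j (j + 1) (by omega)
    have := hj.ne_zero
    simp [IsAddableRow, removeBoxAt]
    omega

theorem isAddableRow_of_addBoxAt (h : IsPartFun (addBoxAt f i)) : IsAddableRow f i := by
  rcases i with _ | i
  · exact Or.inl rfl
  · have := h.1 i (i + 1) (by omega)
    simp [addBoxAt] at this
    exact Or.inr (by simpa using this)

theorem addBoxAt (hf : IsPartFun f) (hi : IsAddableRow f i) : IsPartFun (addBoxAt f i) := by
  refine ⟨fun s t hst => ?_, ?_⟩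
  · have hmono := hf.1 s t hst
    rcases hi with rfl | hi
    · have := hf.1 0 t (Nat.zero_le t)
      simp only [_root_.addBoxAt, update_apply]
      split_ifs <;> subst_vars <;> omega
    · have := hf.1 s (i - 1)
      have := hf.1 (i - 1) t
      simp only [_root_.addBoxAt, update_apply]
      split_ifs <;> subst_vars <;> omega
  · obtain ⟨N, hN⟩ := hf.2
    exact ⟨max N (i + 1), fun t ht => by
      simp [_root_.addBoxAt, show t ≠ i by omega, hN t (by omega)]⟩

theorem removeBoxAt (hf : IsPartFun f) (hj : IsRemovableRow f j) :
    IsPartFun (removeBoxAt f j) := by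
  refine ⟨fun s t hst => ?_, ?_⟩
  · have hmono := hf.1 s t hst
    have := hf.1 s j
    have := hf.1 (j + 1) t
    unfold IsRemovableRow at hj
    simp only [_root_.removeBoxAt, update_apply]
    split_ifs <;> subst_vars <;> omega
  · obtain ⟨N, hN⟩ := hf.2
    exact ⟨max N (j + 1), fun t ht => by
      simp [_root_.removeBoxAt, show t ≠ j by omega, hN t (by omega)]⟩

theorem mem_addableRows (hf : IsPartFun f) : i ∈ addableRows f ↔ IsAddableRow f i := by
  refine ⟨fun h => (Finset.mem_filter.1 h).2, fun h => Finset.mem_filter.2 ⟨?_, h⟩⟩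
  rw [Finset.mem_range]
  rcases h with rfl | h
  · omega
  · have := hf.lt_partLength (i := i - 1) (by omega)
    omega

theorem mem_removableRows (hf : IsPartFun f) : j ∈ removableRows f ↔ IsRemovableRow f j :=
  ⟨fun h => (Finset.mem_filter.1 h).2, fun h =>
    Finset.mem_filter.2 ⟨Finset.mem_range.2 (hf.lt_partLength h.ne_zero), h⟩⟩

/-- Row `0` is always addable, and row `j + 1` is addable exactly when row `j` is removable. -/
theorem card_addableRows (hf : IsPartFun f) :
    (addableRows f).card = (removableRows f).card + 1 := by
  have : addableRows f = insert 0 ((removableRows f).map (addLeftEmbedding 1)) := by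
    ext i
    rcases i with _ | j
    · simp [hf.mem_addableRows, IsAddableRow]
    · simp [hf.mem_addableRows, hf.mem_removableRows, IsAddableRow, IsRemovableRow, add_comm 1]
  rw [this, Finset.card_insert_of_notMem (by simp), Finset.card_map]

theorem mem_addableRows_and_mem_removableRows_erase_iff (hf : IsPartFun f) :
    i ∈ addableRows f ∧ j ∈ (removableRows (_root_.addBoxAt f i)).erase i ↔
      i ∈ (addableRows (_root_.removeBoxAt f j)).erase j ∧ j ∈ removableRows f := by
  simp only [Finset.mem_erase]
  constructor
  · rintro ⟨hi, hji, hj⟩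
    have hi := hf.mem_addableRows.1 hi
    obtain ⟨hj', hi'⟩ := (isAddableRow_and_isRemovableRow_addBoxAt_iff hji.symm).1
      ⟨hi, (hf.addBoxAt hi).mem_removableRows.1 hj⟩
    exact ⟨⟨hji.symm, (hf.removeBoxAt hj').mem_addableRows.2 hi'⟩, hf.mem_removableRows.2 hj'⟩
  · rintro ⟨⟨hij, hi⟩, hj⟩
    have hj := hf.mem_removableRows.1 hj
    obtain ⟨hi', hj'⟩ := (isAddableRow_and_isRemovableRow_addBoxAt_iff hij).2
      ⟨hj, (hf.removeBoxAt hj).mem_addableRows.1 hi⟩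
    exact ⟨hf.mem_addableRows.2 hi', hij.symm, (hf.addBoxAt hi').mem_removableRows.2 hj'⟩

end IsPartFun

theorem le_partSize (hf : HasFiniteSupport f) (i : ℕ) : f i ≤ partSize f :=
  single_le_finsum i hf fun _ => Nat.zero_le _

theorem partSize_eq_zero_iff (hf : HasFiniteSupport f) : partSize f = 0 ↔ f = fun _ => 0 :=
  ⟨fun h => funext fun i => Nat.le_zero.1 (h ▸ le_partSize hf i), fun h => h ▸ partSize_zero⟩

theorem partSize_addBoxAt (hf : HasFiniteSupport f) (i : ℕ) :
    partSize (addBoxAt f i) = partSize f + 1 := by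
  have hsingle : addBoxAt f i = fun t => f t + (Pi.single i 1 : ℕ → ℕ) t := by
    ext t
    rcases eq_or_ne t i with rfl | h <;> simp [addBoxAt, *]
  have hsupp : HasFiniteSupport (Pi.single i 1 : ℕ → ℕ) :=
    (Set.finite_singleton i).subset Pi.support_single_subset
  rw [partSize, partSize, hsingle, finsum_add_distrib hf hsupp,
    finsum_eq_single (Pi.single i 1 : ℕ → ℕ) i fun t ht => Pi.single_eq_of_ne ht 1,
    Pi.single_eq_same]

theorem partSize_removeBoxAt (hf : HasFiniteSupport f) (hj : f j ≠ 0) :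
    partSize (removeBoxAt f j) + 1 = partSize f := by
  have hf' : HasFiniteSupport (removeBoxAt f j) :=
    hf.subset fun t ht => by
      rcases eq_or_ne t j with rfl | h
      · exact hj
      · simpa [removeBoxAt, h] using ht
  rw [← partSize_addBoxAt hf', addBoxAt_removeBoxAt hj]

end Partitions

def YoungCovBy (f g : ℕ → ℕ) : Prop := IsPartFun f ∧ IsPartFun g ∧ AddBox f g

section YoungCovBy

variable {f g : ℕ → ℕ}

theorem YoungCovBy.partSize_eq (h : YoungCovBy f g) : partSize g = partSize f + 1 := by
  obtain ⟨hf, -, i, rfl⟩ := h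
  exact partSize_addBoxAt hf.hasFiniteSupport i

theorem youngCovBy_iff_exists_removeBoxAt (hg : IsPartFun g) :
    YoungCovBy f g ↔ ∃ j ∈ removableRows g, removeBoxAt g j = f := by
  simp only [hg.mem_removableRows]
  constructor
  · rintro ⟨hf, -, i, rfl⟩
    exact ⟨i, hf.isRemovableRow_addBoxAt i, removeBoxAt_addBoxAt f i⟩
  · rintro ⟨j, hj, rfl⟩
    exact ⟨hg.removeBoxAt hj, hg, j, (addBoxAt_removeBoxAt hj.ne_zero).symm⟩

theorem youngCovBy_iff_exists_addBoxAt (hf : IsPartFun f) :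
    YoungCovBy f g ↔ ∃ i ∈ addableRows f, addBoxAt f i = g := by
  simp only [hf.mem_addableRows]
  constructor
  · rintro ⟨-, hg, i, rfl⟩
    exact ⟨i, hg.isAddableRow_of_addBoxAt, rfl⟩
  · rintro ⟨i, hi, rfl⟩
    exact ⟨hf, hf.addBoxAt hi, i, rfl⟩

theorem setOf_youngCovBy_finite (g : ℕ → ℕ) : {f | YoungCovBy f g}.Finite := by
  by_cases hg : IsPartFun g
  · refine ((removableRows g).finite_toSet.image (removeBoxAt g)).subset fun f hf => ?_
    obtain ⟨j, hj, rfl⟩ := (youngCovBy_iff_exists_removeBoxAt hg).1 hf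
    exact Set.mem_image_of_mem _ hj
  · exact Set.finite_empty.subset fun f hf => hg hf.2.1

theorem setOf_symmGen_youngCovBy_finite (g : ℕ → ℕ) :
    {f | Relation.SymmGen YoungCovBy f g}.Finite := by
  by_cases hg : IsPartFun g
  · refine ((setOf_youngCovBy_finite g).union
      ((addableRows g).finite_toSet.image (addBoxAt g))).subset ?_
    rintro f (hf | hf)
    · exact Or.inl hf
    · obtain ⟨i, hi, rfl⟩ := (youngCovBy_iff_exists_addBoxAt hg).1 hf
      exact Or.inr (Set.mem_image_of_mem _ hi)
  · exact Set.finite_empty.subset fun f hf => hg (hf.elim (·.2.1) (·.1))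

end YoungCovBy

theorem oscTabCount_eq_card_relWalk (n : ℕ) (μ : ℕ → ℕ) :
    oscTabCount n μ = Nat.card (RelWalk (Relation.SymmGen YoungCovBy) n (fun _ => 0) μ) := by
  refine Nat.card_congr (Equiv.subtypeEquivRight fun T => ?_)
  simp only [IsOscTab, Relation.SymmGen, YoungCovBy]
  constructor
  · rintro ⟨⟨hpart, h0, hstep⟩, hlast⟩
    refine ⟨h0, hlast, fun k => ?_⟩
    have := hstep k
    have := hpart k.castSucc
    have := hpart k.succ
    tauto
  · rintro ⟨h0, hlast, hstep⟩
    refine ⟨⟨Fin.forall_fin_succ.2 ⟨h0 ▸ isPartFun_zero, fun k => ?_⟩, h0, fun k => ?_⟩, hlast⟩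
    · have := hstep k; tauto
    · have := hstep k; tauto

theorem sytCount_eq_card_relWalk (m : ℕ) (μ : ℕ → ℕ) :
    sytCount m μ = Nat.card (RelWalk YoungCovBy m (fun _ => 0) μ) := by
  refine Nat.card_congr (Equiv.subtypeEquivRight fun T => ?_)
  simp only [YoungCovBy]
  constructor
  · rintro ⟨hpart, h0, hlast, hstep⟩
    exact ⟨h0, hlast, fun k => ⟨hpart _, hpart _, hstep k⟩⟩
  · rintro ⟨h0, hlast, hstep⟩
    exact ⟨Fin.forall_fin_succ.2 ⟨h0 ▸ isPartFun_zero, fun k => (hstep k).2.1⟩, h0, hlast,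
      fun k => (hstep k).2.2⟩

theorem oscTabCount_zero : oscTabCount 0 (fun _ => 0) = 1 := by
  rw [oscTabCount_eq_card_relWalk, RelWalk.card_zero_self]

theorem sytCount_zero : sytCount 0 (fun _ => 0) = 1 := by
  rw [sytCount_eq_card_relWalk, RelWalk.card_zero_self]

theorem oscTabCount_eq_zero_of_lt {n : ℕ} {μ : ℕ → ℕ} (h : n < partSize μ) :
    oscTabCount n μ = 0 := by
  have : IsEmpty (RelWalk (Relation.SymmGen YoungCovBy) n (fun _ => 0) μ) := by
    refine RelWalk.isEmpty_of_lt partSize (fun c b hcb => ?_) (by rwa [partSize_zero, zero_add])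
    rcases hcb with hcb | hcb <;> have := hcb.partSize_eq <;> omega
  rw [oscTabCount_eq_card_relWalk, Nat.card_of_isEmpty]

theorem oscTabCount_succ {n : ℕ} {μ : ℕ → ℕ} (hμ : IsPartFun μ) :
    oscTabCount (n + 1) μ = ∑ j ∈ removableRows μ, oscTabCount n (removeBoxAt μ j) +
      ∑ i ∈ addableRows μ, oscTabCount n (addBoxAt μ i) := by
  classical
  have hdisj : Disjoint ((removableRows μ).image (removeBoxAt μ))
      ((addableRows μ).image (addBoxAt μ)) := by
    refine Finset.disjoint_left.2 fun f hdown hup => ?_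
    have := ((youngCovBy_iff_exists_removeBoxAt hμ).2 (Finset.mem_image.1 hdown)).partSize_eq
    have := ((youngCovBy_iff_exists_addBoxAt hμ).2 (Finset.mem_image.1 hup)).partSize_eq
    omega
  rw [oscTabCount_eq_card_relWalk, RelWalk.card_succ setOf_symmGen_youngCovBy_finite
      ((removableRows μ).image (removeBoxAt μ) ∪ (addableRows μ).image (addBoxAt μ)) fun f => by
        simp only [Finset.mem_union, Finset.mem_image, Relation.SymmGen,
          youngCovBy_iff_exists_removeBoxAt hμ, youngCovBy_iff_exists_addBoxAt hμ],
    Finset.sum_union hdisj,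
    Finset.sum_image fun j hj j' hj' => removeBoxAt_injOn μ
      (hμ.mem_removableRows.1 hj).ne_zero (hμ.mem_removableRows.1 hj').ne_zero,
    Finset.sum_image fun i _ i' _ => (addBoxAt_injective μ ·)]
  simp only [oscTabCount_eq_card_relWalk]

theorem sytCount_succ {m : ℕ} {μ : ℕ → ℕ} (hμ : IsPartFun μ) :
    sytCount (m + 1) μ = ∑ j ∈ removableRows μ, sytCount m (removeBoxAt μ j) := by
  classical
  rw [sytCount_eq_card_relWalk, RelWalk.card_succ setOf_youngCovBy_finite
      ((removableRows μ).image (removeBoxAt μ)) fun f => by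
        rw [Finset.mem_image, youngCovBy_iff_exists_removeBoxAt hμ],
    Finset.sum_image fun j hj j' hj' => removeBoxAt_injOn μ
      (hμ.mem_removableRows.1 hj).ne_zero (hμ.mem_removableRows.1 hj').ne_zero]
  simp only [sytCount_eq_card_relWalk]

open scoped Nat

/-- The commutation relation `DU = UD + 1` for the down and up operators of Young's lattice. -/
theorem sum_down_up_eq_sum_up_down_add {M : Type*} [AddCommMonoid M] {μ : ℕ → ℕ}
    (hμ : IsPartFun μ) (g : (ℕ → ℕ) → M) :
    ∑ i ∈ addableRows μ, ∑ j ∈ removableRows (addBoxAt μ i), g (removeBoxAt (addBoxAt μ i) j) =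
      ∑ j ∈ removableRows μ, ∑ i ∈ addableRows (removeBoxAt μ j),
        g (addBoxAt (removeBoxAt μ j) i) + g μ := by
  have hup : ∀ i ∈ addableRows μ,
      ∑ j ∈ removableRows (addBoxAt μ i), g (removeBoxAt (addBoxAt μ i) j) =
        g μ + ∑ j ∈ (removableRows (addBoxAt μ i)).erase i, g (removeBoxAt (addBoxAt μ i) j) := by
    intro i hi
    have hi := hμ.mem_addableRows.1 hi
    rw [← Finset.add_sum_erase _ _ ((hμ.addBoxAt hi).mem_removableRows.2
      (hμ.isRemovableRow_addBoxAt i)), removeBoxAt_addBoxAt]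
  have hdown : ∀ j ∈ removableRows μ,
      ∑ i ∈ addableRows (removeBoxAt μ j), g (addBoxAt (removeBoxAt μ j) i) =
        g μ + ∑ i ∈ (addableRows (removeBoxAt μ j)).erase j, g (addBoxAt (removeBoxAt μ j) i) := by
    intro j hj
    have hj := hμ.mem_removableRows.1 hj
    rw [← Finset.add_sum_erase _ _ ((hμ.removeBoxAt hj).mem_addableRows.2
      (hμ.isAddableRow_removeBoxAt hj)), addBoxAt_removeBoxAt hj.ne_zero]
  have hswap :
      ∑ i ∈ addableRows μ, ∑ j ∈ (removableRows (addBoxAt μ i)).erase i,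
        g (removeBoxAt (addBoxAt μ i) j) =
      ∑ j ∈ removableRows μ, ∑ i ∈ (addableRows (removeBoxAt μ j)).erase j,
        g (addBoxAt (removeBoxAt μ j) i) := by
    rw [Finset.sum_comm' fun i j => hμ.mem_addableRows_and_mem_removableRows_erase_iff]
    refine Finset.sum_congr rfl fun j _ => Finset.sum_congr rfl fun i hi => ?_
    rw [removeBoxAt_addBoxAt_comm (Finset.ne_of_mem_erase hi)]
  rw [Finset.sum_congr rfl hup, Finset.sum_congr rfl hdown, Finset.sum_add_distrib,
    Finset.sum_add_distrib, hswap, Finset.sum_const, Finset.sum_const, hμ.card_addableRows,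
    succ_nsmul]
  abel

theorem sum_sytCount_addBoxAt {m : ℕ} {μ : ℕ → ℕ} (hμ : IsPartFun μ) (hsize : partSize μ = m) :
    ∑ i ∈ addableRows μ, sytCount (m + 1) (addBoxAt μ i) = (m + 1) * sytCount m μ := by
  induction m using Nat.strong_induction_on generalizing μ with
  | _ m ih =>
  have hdown : ∑ j ∈ removableRows μ, ∑ i ∈ addableRows (removeBoxAt μ j),
      sytCount m (addBoxAt (removeBoxAt μ j) i) = m * sytCount m μ := by
    rcases m with _ | m
    · refine (Finset.sum_eq_zero fun j hj => ?_).trans (zero_mul _).symm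
      have := le_partSize hμ.hasFiniteSupport j
      exact absurd (by omega) (hμ.mem_removableRows.1 hj).ne_zero
    · rw [sytCount_succ hμ, Finset.mul_sum]
      refine Finset.sum_congr rfl fun j hj => ?_
      have hj := hμ.mem_removableRows.1 hj
      have := partSize_removeBoxAt hμ.hasFiniteSupport hj.ne_zero
      exact ih m (by omega) (hμ.removeBoxAt hj) (by omega)
  calc ∑ i ∈ addableRows μ, sytCount (m + 1) (addBoxAt μ i)
      = ∑ i ∈ addableRows μ, ∑ j ∈ removableRows (addBoxAt μ i),
          sytCount m (removeBoxAt (addBoxAt μ i) j) :=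
        Finset.sum_congr rfl fun i hi => sytCount_succ (hμ.addBoxAt (hμ.mem_addableRows.1 hi))
    _ = m * sytCount m μ + sytCount m μ := by rw [sum_down_up_eq_sum_up_down_add hμ, hdown]
    _ = (m + 1) * sytCount m μ := by ring

theorem choose_mul_doubleFactorial_succ (n r : ℕ) :
    n.choose (2 * r) * (2 * r - 1)‼ * (n - 2 * r) + n.choose (2 * r + 2) * (2 * r + 1)‼ =
      (n + 1).choose (2 * r + 2) * (2 * r + 1)‼ := by
  have h := Nat.choose_succ_right_eq n (2 * r)
  rw [Nat.doubleFactorial_add_one, Nat.choose_succ_succ']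
  calc _ = n.choose (2 * r) * (n - 2 * r) * (2 * r - 1)‼ +
        n.choose (2 * r + 2) * ((2 * r + 1) * (2 * r - 1)‼) := by ring
    _ = _ := by rw [← h]; ring

theorem oscTabCount_eq_sytCount {n : ℕ} {μ : ℕ → ℕ} (hμ : IsPartFun μ) (hsize : partSize μ = n) :
    oscTabCount n μ = sytCount n μ := by
  induction n generalizing μ with
  | zero =>
    obtain rfl : μ = fun _ => 0 := (partSize_eq_zero_iff hμ.hasFiniteSupport).1 hsize
    rw [oscTabCount_zero, sytCount_zero]
  | succ n ih =>
    have hup : ∑ i ∈ addableRows μ, oscTabCount n (addBoxAt μ i) = 0 :=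
      Finset.sum_eq_zero fun i _ =>
        oscTabCount_eq_zero_of_lt (by rw [partSize_addBoxAt hμ.hasFiniteSupport]; omega)
    rw [oscTabCount_succ hμ, hup, add_zero, sytCount_succ hμ]
    refine Finset.sum_congr rfl fun j hj => ?_
    have hj := hμ.mem_removableRows.1 hj
    have := partSize_removeBoxAt hμ.hasFiniteSupport hj.ne_zero
    exact ih (hμ.removeBoxAt hj) (by omega)

theorem oscTabCount_eq_choose_mul_doubleFactorial_mul_sytCount {n r : ℕ} {μ : ℕ → ℕ}
    (hμ : IsPartFun μ) (hsize : partSize μ + 2 * r = n) :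
    oscTabCount n μ = n.choose (2 * r) * (2 * r - 1)‼ * sytCount (partSize μ) μ := by
  induction n generalizing r μ with
  | zero =>
    obtain rfl : r = 0 := by omega
    simpa [show partSize μ = 0 by omega] using oscTabCount_eq_sytCount hμ (by omega)
  | succ n ih =>
    rcases r with _ | r
    · simpa [show partSize μ = n + 1 by omega] using oscTabCount_eq_sytCount hμ (by omega)
    have hsize_down : ∀ j ∈ removableRows μ, partSize (removeBoxAt μ j) + 1 = partSize μ :=
      fun j hj => partSize_removeBoxAt hμ.hasFiniteSupport (hμ.mem_removableRows.1 hj).ne_zero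
    have hsize_up := partSize_addBoxAt hμ.hasFiniteSupport
    have hup : ∑ i ∈ addableRows μ, oscTabCount n (addBoxAt μ i) =
        n.choose (2 * r) * (2 * r - 1)‼ * ((partSize μ + 1) * sytCount (partSize μ) μ) := by
      rw [← sum_sytCount_addBoxAt hμ rfl, Finset.mul_sum]
      refine Finset.sum_congr rfl fun i hi => ?_
      rw [ih (hμ.addBoxAt (hμ.mem_addableRows.1 hi)) (r := r) (by rw [hsize_up]; omega),
        hsize_up]
    have hdown : ∑ j ∈ removableRows μ, oscTabCount n (removeBoxAt μ j) =
        n.choose (2 * (r + 1)) * (2 * (r + 1) - 1)‼ * sytCount (partSize μ) μ := by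
      rcases hm : partSize μ with _ | m
      · rw [Nat.choose_eq_zero_of_lt (by omega), zero_mul, zero_mul]
        exact Finset.sum_eq_zero fun j hj => by have := hsize_down j hj; omega
      · rw [sytCount_succ hμ, Finset.mul_sum]
        refine Finset.sum_congr rfl fun j hj => ?_
        have := hsize_down j hj
        rw [ih (hμ.removeBoxAt (hμ.mem_removableRows.1 hj)) (r := r + 1) (by omega),
          show partSize (removeBoxAt μ j) = m by omega]
    rw [oscTabCount_succ hμ, hdown, hup, show 2 * (r + 1) = 2 * r + 2 by ring,
      show 2 * r + 2 - 1 = 2 * r + 1 by omega, ← choose_mul_doubleFactorial_succ,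
      show n - 2 * r = partSize μ + 1 by omega]
    ring

theorem oscTab_eq_choose_doubleFactorial_syt (n r : ℕ) (h : 2 * r ≤ n)
    (mu : ℕ → ℕ) (hmu : IsPartFun mu) (hsum : ∑ᶠ i, mu i = n - 2 * r) :
    oscTabCount n mu =
      n.choose (2 * r) * Nat.doubleFactorial (2 * r - 1) * sytCount (n - 2 * r) mu := by
  have hsize : partSize mu = n - 2 * r := hsum
  rw [oscTabCount_eq_choose_mul_doubleFactorial_mul_sytCount (r := r) hmu (by omega), hsize]
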